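/- For real a, b with a, b > 0 and a + b < 1 + min(a,b) (ensuring convergence), and for real α with α + 1 > 0: (a·b/(α+1)) · ₃F₂(a+1, b+1, 1; α+2, 2; 1) = (1/(α+1))·Γ(α+2)Γ(α−a−b+1)/(Γ(α−a+1)Γ(α−b+1)) − 1, whenever α+1−a−b > 0 and none of the Gamma arguments is a non-positive integer. -/

import Mathlib

noncomputable def poch (a : ℝ) (n : ℕ) : ℝ := (ascPochhammer ℝ n).eval a

/-- Generalized hypergeometric series ₃F₂(a,b,c; d,e; x). -/
noncomputable def F32 (a b c d e x : ℝ) : ℝ :=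
  ∑' n : ℕ, (poch a n * poch b n * poch c n) / (poch d n * poch e n * (n.factorial : ℝ)) * x ^ n

def NotNonposInt (x : ℝ) : Prop := ∀ m : ℕ, x ≠ -(m : ℝ)

/-!
Shifting the summation index by one turns the left-hand side into `₂F₁(a, b; c; 1) - 1` with
`c = α + 1`, so the identity is Gauss's summation theorem. That theorem comes from Euler's
integral: expanding `(1 - x) ^ (-a)` as a binomial series inside the Beta integral
`B(b, c - a - b)` and integrating term by term gives
`∑ (a)ₙ / n! · B(b + n, c - b) = B(b, c - b) · ₂F₁(a, b; c; 1)`.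
Since `a, b > 0`, every term is nonnegative, so the interchange of sum and integral is
Tonelli's theorem for `ℝ≥0∞`-valued integrals and needs no convergence estimates.
-/

open scoped Nat
open MeasureTheory Set ProbabilityTheory

lemma poch_zero (a : ℝ) : poch a 0 = 1 := by simp [poch]

lemma poch_succ (a : ℝ) (n : ℕ) : poch a (n + 1) = poch a n * (a + n) :=
  ascPochhammer_succ_eval n a

lemma poch_succ_left (a : ℝ) (n : ℕ) : poch a (n + 1) = a * poch (a + 1) n := by
  simp [poch, ascPochhammer_succ_left, Polynomial.eval_comp]

lemma poch_one (n : ℕ) : poch 1 n = n ! := ascPochhammer_eval_one ℝ n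

lemma poch_two (n : ℕ) : poch 2 n = (n + 1)! := by
  simpa [poch, add_comm 1 n, one_add_one_eq_two] using factorial_mul_ascPochhammer ℝ 1 n

lemma poch_pos {a : ℝ} (ha : 0 < a) (n : ℕ) : 0 < poch a n := ascPochhammer_pos n a ha

lemma Ring.choose_add_sub_one_eq_poch_div (a : ℝ) (n : ℕ) :
    Ring.choose (a + n - 1) n = poch a n / n ! := by
  rw [Ring.choose_eq_smul, Polynomial.descPochhammer_smeval_eq_ascPochhammer,
    Polynomial.ascPochhammer_smeval_eq_eval, poch, smul_eq_mul, div_eq_inv_mul]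
  ring_nf

lemma hasSum_poch_div_factorial_mul_pow (a : ℝ) {x : ℝ} (hx : |x| < 1) :
    HasSum (fun n : ℕ => poch a n / n ! * x ^ n) ((1 - x) ^ (-a)) := by
  have h := (Real.one_div_one_sub_rpow_hasFPowerSeriesOnBall_zero a).hasSum
    (y := x) (by simpa [enorm_eq_nnnorm, ← NNReal.coe_lt_one] using hx)
  have h1x : 0 ≤ 1 - x := by linarith [le_abs_self x]
  simpa [FormalMultilinearSeries.ofScalars_apply_eq, Ring.choose_add_sub_one_eq_poch_div,
    Real.rpow_neg h1x, mul_comm] using h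

lemma Real.Gamma_add_nat_eq_poch_mul {x : ℝ} (hx : ∀ k : ℕ, x ≠ -k) (n : ℕ) :
    Real.Gamma (x + n) = poch x n * Real.Gamma x := by
  induction n with
  | zero => simp [poch_zero]
  | succ n ih =>
    have hxn : x + n ≠ 0 := fun h => hx n (eq_neg_of_add_eq_zero_left h)
    rw [Nat.cast_succ, ← add_assoc, Real.Gamma_add_one hxn, ih, poch_succ]
    ring

lemma beta_add_nat {p q : ℝ} (hp : ∀ k : ℕ, p ≠ -k) (hpq : ∀ k : ℕ, p + q ≠ -k) (n : ℕ) :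
    beta (p + n) q = poch p n / poch (p + q) n * beta p q := by
  rw [beta, beta, add_right_comm, Real.Gamma_add_nat_eq_poch_mul hp,
    Real.Gamma_add_nat_eq_poch_mul hpq]
  ring

lemma hasSum_of_tsum_ofReal_eq {ι : Type*} {f : ι → ℝ} {s : ℝ} (hf : ∀ i, 0 ≤ f i) (hs : 0 ≤ s)
    (h : ∑' i, ENNReal.ofReal (f i) = ENNReal.ofReal s) : HasSum f s := by
  have hfin : ∑' i, ENNReal.ofReal (f i) ≠ ⊤ := h ▸ ENNReal.ofReal_ne_top
  have hsum := ENNReal.hasSum_toReal hfin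
  rw [← ENNReal.tsum_toReal_eq fun _ => ENNReal.ofReal_ne_top, h, ENNReal.toReal_ofReal hs] at hsum
  simpa only [ENNReal.toReal_ofReal (hf _)] using hsum

noncomputable def betaIntegrand (p q x : ℝ) : ℝ := x ^ (p - 1) * (1 - x) ^ (q - 1)

section BetaIntegrand

variable {p q x : ℝ}

lemma betaIntegrand_nonneg (hx : x ∈ Ioo 0 1) : 0 ≤ betaIntegrand p q x :=
  mul_nonneg (Real.rpow_nonneg hx.1.le _) (Real.rpow_nonneg (by linarith [hx.2]) _)

@[fun_prop]
lemma measurable_betaIntegrand : Measurable (betaIntegrand p q) := by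
  unfold betaIntegrand; fun_prop

lemma pow_mul_betaIntegrand (hx : x ∈ Ioo 0 1) (n : ℕ) :
    x ^ n * betaIntegrand p q x = betaIntegrand (p + n) q x := by
  rw [betaIntegrand, betaIntegrand, ← mul_assoc, ← Real.rpow_natCast, ← Real.rpow_add hx.1]
  ring_nf

lemma one_sub_rpow_neg_mul_betaIntegrand (hx : x ∈ Ioo 0 1) (a : ℝ) :
    (1 - x) ^ (-a) * betaIntegrand p q x = betaIntegrand p (q - a) x := by
  rw [betaIntegrand, betaIntegrand, mul_left_comm, ← Real.rpow_add (by linarith [hx.2])]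
  ring_nf

lemma lintegral_betaIntegrand (hp : 0 < p) (hq : 0 < q) :
    ∫⁻ x in Ioo 0 1, ENNReal.ofReal (betaIntegrand p q x) = ENNReal.ofReal (beta p q) := by
  have h := lintegral_betaPDF_eq_one hp hq
  simp_rw [lintegral_betaPDF, mul_assoc, ENNReal.ofReal_mul (one_div_pos.2 (beta_pos hp hq)).le]
    at h
  rw [lintegral_const_mul _ (by fun_prop)] at h
  unfold betaIntegrand
  rw [ENNReal.eq_inv_of_mul_eq_one_left ((mul_comm _ _).trans h),
    ← ENNReal.ofReal_inv_of_pos (one_div_pos.2 (beta_pos hp hq)), one_div, inv_inv]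

end BetaIntegrand

/-- The `n`-th term of `₂F₁(a, b; c; 1)`. -/
noncomputable def gaussCoeff (a b c : ℝ) (n : ℕ) : ℝ := poch a n * poch b n / (poch c n * n !)

section Gauss

variable {a b q : ℝ}

lemma lintegral_pow_mul_betaIntegrand (ha : 0 < a) (hb : 0 < b) (hq : 0 < q) (n : ℕ) :
    ∫⁻ x in Ioo 0 1, ENNReal.ofReal (poch a n / n ! * x ^ n * betaIntegrand b q x) =
      ENNReal.ofReal (gaussCoeff a b (b + q) n * beta b q) := by
  have hcoef : 0 ≤ poch a n / n ! := by have := poch_pos ha n; positivity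
  have hnotneg {y : ℝ} (hy : 0 < y) (k : ℕ) : y ≠ -k := by
    have := k.cast_nonneg (α := ℝ); linarith
  simp_rw [mul_assoc, ENNReal.ofReal_mul hcoef]
  rw [lintegral_const_mul _ (by fun_prop), setLIntegral_congr_fun measurableSet_Ioo
      fun x hx => by rw [pow_mul_betaIntegrand hx], lintegral_betaIntegrand (by positivity) hq,
    ← ENNReal.ofReal_mul hcoef, beta_add_nat (hnotneg hb) (hnotneg (by linarith))]
  congr 1
  rw [gaussCoeff]
  ring

lemma tsum_ofReal_poch_div_mul_pow_mul_betaIntegrand (ha : 0 < a) {x : ℝ} (hx : x ∈ Ioo 0 1) :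
    ∑' n : ℕ, ENNReal.ofReal (poch a n / n ! * x ^ n * betaIntegrand b q x) =
      ENNReal.ofReal (betaIntegrand b (q - a) x) := by
  have hsum := (hasSum_poch_div_factorial_mul_pow a
    (abs_lt.2 ⟨by linarith [hx.1], hx.2⟩)).mul_right (betaIntegrand b q x)
  have hnonneg (n : ℕ) : 0 ≤ poch a n / n ! * x ^ n * betaIntegrand b q x := by
    have := poch_pos ha n; have := hx.1; have := betaIntegrand_nonneg (p := b) (q := q) hx
    positivity
  rw [← ENNReal.ofReal_tsum_of_nonneg hnonneg hsum.summable, hsum.tsum_eq,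
    one_sub_rpow_neg_mul_betaIntegrand hx]

theorem hasSum_gaussCoeff_beta (ha : 0 < a) (hb : 0 < b) (hqa : 0 < q - a) :
    HasSum (gaussCoeff a b (b + q)) (beta b (q - a) / beta b q) := by
  have hq : 0 < q := by linarith
  have hmain : ∑' n, ENNReal.ofReal (gaussCoeff a b (b + q) n * beta b q) =
      ENNReal.ofReal (beta b (q - a)) := by
    rw [← lintegral_betaIntegrand hb hqa, ← setLIntegral_congr_fun measurableSet_Ioo
        fun x hx => tsum_ofReal_poch_div_mul_pow_mul_betaIntegrand ha hx,
      lintegral_tsum fun n => by fun_prop]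
    exact tsum_congr fun n => (lintegral_pow_mul_betaIntegrand ha hb hq n).symm
  have hcoef (n : ℕ) : 0 ≤ gaussCoeff a b (b + q) n * beta b q := by
    have := poch_pos ha n; have := poch_pos hb n; have := poch_pos (add_pos hb hq) n
    have := beta_pos hb hq
    unfold gaussCoeff; positivity
  have hsum := hasSum_of_tsum_ofReal_eq hcoef (beta_pos hb hqa).le hmain
  simpa [mul_div_cancel_right₀ _ (beta_pos hb hq).ne'] using hsum.div_const (beta b q)

theorem hasSum_gaussCoeff {a b c : ℝ} (ha : 0 < a) (hb : 0 < b) (hcab : 0 < c - a - b) :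
    HasSum (gaussCoeff a b c)
      (Real.Gamma c * Real.Gamma (c - a - b) / (Real.Gamma (c - a) * Real.Gamma (c - b))) := by
  have h := hasSum_gaussCoeff_beta ha hb (q := c - b) (by linarith)
  rw [add_sub_cancel] at h
  convert h using 1
  rw [beta, beta, add_sub_cancel, show b + (c - b - a) = c - a by ring,
    show c - b - a = c - a - b by ring]
  field_simp [(Real.Gamma_pos_of_pos hb).ne', (Real.Gamma_pos_of_pos (by linarith : 0 < c)).ne']

end Gauss

lemma mul_F32_eq_tsum_gaussCoeff_succ (a b c : ℝ) :
    a * b / c * F32 (a + 1) (b + 1) 1 (c + 1) 2 1 = ∑' n, gaussCoeff a b c (n + 1) := by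
  rw [F32, ← tsum_mul_left]
  refine tsum_congr fun n => ?_
  rw [gaussCoeff, poch_succ_left a, poch_succ_left b, poch_succ_left c, poch_one, poch_two,
    one_pow, mul_one]
  have : (n ! : ℝ) ≠ 0 := by positivity
  field_simp

theorem stmt14_general (a b α : ℝ) (ha : 0 < a) (hb : 0 < b)
    (hconv : α + 1 - a - b > 0) :
    (a * b / (α + 1)) * F32 (a + 1) (b + 1) 1 (α + 2) 2 1
      = (1 / (α + 1)) * Real.Gamma (α + 2) * Real.Gamma (α - a - b + 1) /
          (Real.Gamma (α - a + 1) * Real.Gamma (α - b + 1)) - 1 := by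
  have hα : α + 1 ≠ 0 := by linarith
  have hsum := (hasSum_nat_add_iff' 1).mpr (hasSum_gaussCoeff ha hb hconv)
  rw [show α + 2 = α + 1 + 1 by ring, mul_F32_eq_tsum_gaussCoeff_succ, hsum.tsum_eq,
    Real.Gamma_add_one hα, one_div, inv_mul_cancel_left₀ hα,
    show α - a - b + 1 = α + 1 - a - b by ring, show α - a + 1 = α + 1 - a by ring,
    show α - b + 1 = α + 1 - b by ring]
  simp [gaussCoeff, poch_zero]

/-- `(ab/(α+1))·₃F₂(a+1,b+1,1; α+2,2; 1) = (1/(α+1))·Γ(α+2)Γ(α−a−b+1)/(Γ(α−a+1)Γ(α−b+1)) − 1`. -/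
theorem stmt14 (a b α : ℝ) (ha : 0 < a) (hb : 0 < b)
    (hab : a + b < 1 + min a b) (hα : α + 1 > 0) (hconv : α + 1 - a - b > 0)
    (h1 : NotNonposInt (α + 2)) (h2 : NotNonposInt (α - a - b + 1))
    (h3 : NotNonposInt (α - a + 1)) (h4 : NotNonposInt (α - b + 1)) :
    (a * b / (α + 1)) * F32 (a + 1) (b + 1) 1 (α + 2) 2 1
      = (1 / (α + 1)) * Real.Gamma (α + 2) * Real.Gamma (α - a - b + 1) /
          (Real.Gamma (α - a + 1) * Real.Gamma (α - b + 1)) - 1 :=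
  stmt14_general a b α ha hb hconv
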